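/- Let N ≥ 1, M > 0, x, y ∈ ℝ^N with all components in [0, M], let 0 < δ < M, and let F : K_x → K_y satisfy |d²(p,q) − d²(F(p), F(q))| ≤ 2δ for all p, q ∈ K_x. Then for every n ∈ {1,…,N} there exists m ∈ {1,…,N} such that both F(p_n^+(x)) ∈ {p_m^+(y), p_m^−(y)} and F(p_n^−(x)) ∈ {p_m^+(y), p_m^−(y)}. -/

import Mathlib

noncomputable def box (M : ℝ) (n : ℕ) : Set (ℝ × ℝ) :=
  Set.Icc (4 * M + 10 * M * (n : ℝ)) (4 * M + 10 * M * (n : ℝ) + 2 * M) ×ˢ Set.Icc (-M) M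

noncomputable def pp {N : ℕ} (M : ℝ) (z : Fin N → ℝ) (n : Fin N) : ℝ × ℝ :=
  (10 * M * ((n : ℕ) : ℝ), z n)

noncomputable def pm {N : ℕ} (M : ℝ) (z : Fin N → ℝ) (n : Fin N) : ℝ × ℝ :=
  (10 * M * ((n : ℕ) : ℝ), -(z n))

noncomputable def Kset {N : ℕ} (M : ℝ) (z : Fin N → ℝ) : Set (ℝ × ℝ) :=
  ⋃ n : Fin N, ({pp M z n, pm M z n} ∪ box M n)

theorem pp_mem {N : ℕ} (M : ℝ) (z : Fin N → ℝ) (n : Fin N) : pp M z n ∈ Kset M z :=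
  Set.mem_iUnion.mpr ⟨n, Or.inl (Set.mem_insert _ _)⟩

theorem pm_mem {N : ℕ} (M : ℝ) (z : Fin N → ℝ) (n : Fin N) : pm M z n ∈ Kset M z :=
  Set.mem_iUnion.mpr ⟨n, Or.inl (Set.mem_insert_of_mem _ rfl)⟩

theorem Kset_compact {N : ℕ} (M : ℝ) (z : Fin N → ℝ) : IsCompact (Kset M z) := by
  apply isCompact_iUnion
  intro n
  exact ((Set.toFinite _).isCompact).union (isCompact_Icc.prod isCompact_Icc)

instance {N : ℕ} (M : ℝ) (z : Fin N → ℝ) : CompactSpace ↥(Kset M z) :=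
  isCompact_iff_compactSpace.mp (Kset_compact M z)

theorem Kset_nonempty {N : ℕ} (hN : 0 < N) (M : ℝ) (z : Fin N → ℝ) : (Kset M z).Nonempty :=
  ⟨pp M z ⟨0, hN⟩, pp_mem M z ⟨0, hN⟩⟩

/-
A point `p` of `K_x` on the vertical segment through `p_n^±(x)` lies at distance between `4M`
and `6M` from every point of the square `□(n)`. If `F p` lay in a square `□(m)`, the images of
three points of `□(n)` pairwise `2M` apart would lie at distance in `(2M, 8M)` from `F p`. Two
points of one square are at most `2M` apart and points of different squares at least `8M`, so
these three images are marked points; being pairwise less than `10M` apart they belong to a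
single pair `{p_b^+(y), p_b^-(y)}`, yet they are pairwise distinct, which is impossible. Hence
`F(p_n^±(x))` are marked points, and since they are at most `2M + 2δ < 10M` apart, they lie in
the same pair.
-/

section Geometry

variable {N : ℕ} {M : ℝ}

lemma dist_eq_max_abs_sub (p q : ℝ × ℝ) : dist p q = max |p.1 - q.1| |p.2 - q.2| := by
  simp only [Prod.dist_eq, Real.dist_eq]

lemma abs_fst_sub_le_dist (p q : ℝ × ℝ) : |p.1 - q.1| ≤ dist p q :=
  (dist_eq_max_abs_sub p q).symm ▸ le_max_left _ _

lemma mem_box_iff {n : ℕ} {q : ℝ × ℝ} :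
    q ∈ box M n ↔ (4 * M + 10 * M * n ≤ q.1 ∧ q.1 ≤ 4 * M + 10 * M * n + 2 * M) ∧
      (-M ≤ q.2 ∧ q.2 ≤ M) :=
  Set.mem_prod

lemma box_subset_Kset (z : Fin N → ℝ) (n : Fin N) : box M n ⊆ Kset M z :=
  fun _ hq => Set.mem_iUnion.mpr ⟨n, Or.inr hq⟩

lemma mem_Kset_iff {z : Fin N → ℝ} {q : ℝ × ℝ} :
    q ∈ Kset M z ↔ ∃ m, q ∈ ({pp M z m, pm M z m} : Set (ℝ × ℝ)) ∨ q ∈ box M m :=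
  Set.mem_iUnion

lemma dist_pp_pm (z : Fin N → ℝ) (n : Fin N) : dist (pp M z n) (pm M z n) = 2 * |z n| := by
  simp only [dist_eq_max_abs_sub, pp, pm, sub_self, abs_zero, sub_neg_eq_add, ← two_mul, abs_mul,
    abs_two]
  exact max_eq_right (by positivity)

lemma fst_of_mem_pair {z : Fin N → ℝ} {n : Fin N} {P : ℝ × ℝ}
    (hP : P ∈ ({pp M z n, pm M z n} : Set (ℝ × ℝ))) : P.1 = 10 * M * (n : ℕ) := by
  rcases hP with rfl | rfl <;> rfl

lemma dist_le_of_mem_box {n : ℕ} {q q' : ℝ × ℝ} (hq : q ∈ box M n) (hq' : q' ∈ box M n) :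
    dist q q' ≤ 2 * M := by
  rw [mem_box_iff] at hq hq'
  rw [dist_eq_max_abs_sub]
  exact max_le (abs_sub_le_iff.mpr ⟨by linarith, by linarith⟩)
    (abs_sub_le_iff.mpr ⟨by linarith, by linarith⟩)

lemma le_dist_of_mem_box_of_ne (hM : 0 ≤ M) {a b : ℕ} (hab : a ≠ b) {q q' : ℝ × ℝ}
    (hq : q ∈ box M a) (hq' : q' ∈ box M b) : 8 * M ≤ dist q q' := by
  wlog hlt : a < b generalizing a b q q'
  · exact (this hab.symm hq' hq (lt_of_le_of_ne (not_lt.mp hlt) hab.symm)).trans_eq (dist_comm _ _)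
  have hab' : (a : ℝ) + 1 ≤ b := by exact_mod_cast hlt
  rw [mem_box_iff] at hq hq'
  calc 8 * M ≤ q'.1 - q.1 := by nlinarith
    _ ≤ |q.1 - q'.1| := by rw [abs_sub_comm]; exact le_abs_self _
    _ ≤ dist q q' := abs_fst_sub_le_dist q q'

lemma eq_of_mem_pair_of_dist_lt (hM : 0 ≤ M) {z : Fin N → ℝ} {a b : Fin N} {P Q : ℝ × ℝ}
    (hP : P ∈ ({pp M z a, pm M z a} : Set (ℝ × ℝ)))
    (hQ : Q ∈ ({pp M z b, pm M z b} : Set (ℝ × ℝ))) (h : dist P Q < 10 * M) : a = b := by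
  by_contra hab
  wlog hlt : a < b generalizing a b P Q
  · exact this hQ hP (dist_comm P Q ▸ h) (Ne.symm hab)
      (lt_of_le_of_ne (not_lt.mp hlt) (Ne.symm hab))
  have hab' : ((a : ℕ) : ℝ) + 1 ≤ (b : ℕ) := by exact_mod_cast hlt
  have : 10 * M ≤ dist P Q := calc
    10 * M ≤ Q.1 - P.1 := by rw [fst_of_mem_pair hP, fst_of_mem_pair hQ]; nlinarith
    _ ≤ |P.1 - Q.1| := by rw [abs_sub_comm]; exact le_abs_self _
    _ ≤ dist P Q := abs_fst_sub_le_dist P Q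
  linarith

lemma dist_mem_Icc_of_mem_box {n : ℕ} {p q : ℝ × ℝ} (hp₁ : p.1 = 10 * M * n) (hp₂ : |p.2| ≤ M)
    (hq : q ∈ box M n) : dist p q ∈ Set.Icc (4 * M) (6 * M) := by
  rw [mem_box_iff] at hq
  rw [abs_le] at hp₂
  have h₁ : |p.1 - q.1| = q.1 - p.1 := by rw [abs_sub_comm, abs_of_nonneg (by linarith)]
  rw [dist_eq_max_abs_sub, h₁]
  exact ⟨le_max_of_le_left (by linarith),
    max_le (by linarith) (abs_sub_le_iff.mpr ⟨by linarith, by linarith⟩)⟩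

lemma exists_equilateral_triple_in_box (hM : 0 ≤ M) (n : ℕ) :
    ∃ c₁ ∈ box M n, ∃ c₂ ∈ box M n, ∃ c₃ ∈ box M n,
      dist c₁ c₂ = 2 * M ∧ dist c₁ c₃ = 2 * M ∧ dist c₂ c₃ = 2 * M := by
  set a : ℝ := 4 * M + 10 * M * n
  refine ⟨(a, -M), ?_, (a, M), ?_, (a + 2 * M, M), ?_, ?_, ?_, ?_⟩
  all_goals simp only [mem_box_iff, dist_eq_max_abs_sub]
  · exact ⟨⟨le_rfl, by linarith⟩, le_rfl, by linarith⟩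
  · exact ⟨⟨le_rfl, by linarith⟩, by linarith, le_rfl⟩
  · exact ⟨⟨by linarith, le_rfl⟩, by linarith, le_rfl⟩
  · rw [sub_self, abs_zero, show -M - M = -(2 * M) by ring, abs_neg, abs_of_nonneg (by linarith)]
    exact max_eq_right (by linarith)
  · rw [show a - (a + 2 * M) = -(2 * M) by ring, show -M - M = -(2 * M) by ring, abs_neg,
      abs_of_nonneg (by linarith), max_self]
  · rw [sub_self, abs_zero, show a - (a + 2 * M) = -(2 * M) by ring, abs_neg,
      abs_of_nonneg (by linarith)]
    exact max_eq_left (by linarith)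

lemma exists_mem_pair_of_mem_box (hM : 0 ≤ M) {z : Fin N → ℝ} {m : ℕ} {q c : ℝ × ℝ}
    (hq : q ∈ box M m) (hc : c ∈ Kset M z) (h₁ : 2 * M < dist q c) (h₂ : dist q c < 8 * M) :
    ∃ b, c ∈ ({pp M z b, pm M z b} : Set (ℝ × ℝ)) := by
  obtain ⟨b, hb | hb⟩ := mem_Kset_iff.mp hc
  · exact ⟨b, hb⟩
  · rcases eq_or_ne m b with rfl | hmb
    · linarith [dist_le_of_mem_box hq hb]
    · linarith [le_dist_of_mem_box_of_ne hM hmb hq hb]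

end Geometry

lemma eq_or_eq_or_eq_of_mem_pair {α : Type*} {u v P Q R : α} (hP : P ∈ ({u, v} : Set α))
    (hQ : Q ∈ ({u, v} : Set α)) (hR : R ∈ ({u, v} : Set α)) : P = Q ∨ P = R ∨ Q = R := by
  rcases hP with rfl | rfl <;> rcases hQ with rfl | rfl <;> rcases hR with rfl | rfl <;> simp

section AlmostIsometry

variable {N : ℕ} {M δ : ℝ} {x y : Fin N → ℝ} {F : Kset M x → Kset M y}

lemma abs_dist_sub_dist_apply_le (hF : ∀ p q, |dist p q - dist (F p) (F q)| ≤ 2 * δ)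
    {p q : ℝ × ℝ} (hp : p ∈ Kset M x) (hq : q ∈ Kset M x) :
    |dist p q - dist (F ⟨p, hp⟩ : ℝ × ℝ) (F ⟨q, hq⟩)| ≤ 2 * δ :=
  hF ⟨p, hp⟩ ⟨q, hq⟩

lemma exists_mem_pair_image_of_fst_eq (hM : 0 < M) (hδM : δ < M)
    (hF : ∀ p q, |dist p q - dist (F p) (F q)| ≤ 2 * δ) {n : Fin N} {p : ℝ × ℝ}
    (hp : p ∈ Kset M x) (hp₁ : p.1 = 10 * M * (n : ℕ)) (hp₂ : |p.2| ≤ M) :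
    ∃ m, (F ⟨p, hp⟩ : ℝ × ℝ) ∈ ({pp M y m, pm M y m} : Set (ℝ × ℝ)) := by
  obtain ⟨m, hm | hm⟩ := mem_Kset_iff.mp (F ⟨p, hp⟩).2
  · exact ⟨m, hm⟩
  exfalso
  have hbox := box_subset_Kset (M := M) x n
  have marked {c : ℝ × ℝ} (hc : c ∈ box M n) :
      ∃ b, (F ⟨c, hbox hc⟩ : ℝ × ℝ) ∈ ({pp M y b, pm M y b} : Set (ℝ × ℝ)) := by
    obtain ⟨h₄, h₆⟩ := dist_mem_Icc_of_mem_box hp₁ hp₂ hc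
    obtain ⟨hlo, hhi⟩ := abs_le.mp (abs_dist_sub_dist_apply_le hF hp (hbox hc))
    exact exists_mem_pair_of_mem_box hM.le hm (F _).2 (by linarith) (by linarith)
  have close {c c' : ℝ × ℝ} (hc : c ∈ box M n) (hc' : c' ∈ box M n) (h : dist c c' = 2 * M) :
      0 < dist (F ⟨c, hbox hc⟩ : ℝ × ℝ) (F ⟨c', hbox hc'⟩) ∧
        dist (F ⟨c, hbox hc⟩ : ℝ × ℝ) (F ⟨c', hbox hc'⟩) < 10 * M := by
    have := abs_le.mp (abs_dist_sub_dist_apply_le hF (hbox hc) (hbox hc'))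
    exact ⟨by linarith, by linarith⟩
  obtain ⟨c₁, h₁, c₂, h₂, c₃, h₃, d₁₂, d₁₃, d₂₃⟩ := exists_equilateral_triple_in_box hM.le n
  obtain ⟨b₁, hb₁⟩ := marked h₁
  obtain ⟨b₂, hb₂⟩ := marked h₂
  obtain ⟨b₃, hb₃⟩ := marked h₃
  have c₁₂ := close h₁ h₂ d₁₂
  have c₁₃ := close h₁ h₃ d₁₃
  have c₂₃ := close h₂ h₃ d₂₃
  obtain rfl := eq_of_mem_pair_of_dist_lt hM.le hb₁ hb₂ c₁₂.2
  obtain rfl := eq_of_mem_pair_of_dist_lt hM.le hb₁ hb₃ c₁₃.2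
  rcases eq_or_eq_or_eq_of_mem_pair hb₁ hb₂ hb₃ with h | h | h
  · exact c₁₂.1.ne' (dist_eq_zero.mpr h)
  · exact c₁₃.1.ne' (dist_eq_zero.mpr h)
  · exact c₂₃.1.ne' (dist_eq_zero.mpr h)

end AlmostIsometry

theorem step3_image_of_marked_points_general {N : ℕ} {M : ℝ} (hM : 0 < M)
    (x y : Fin N → ℝ) (hx : ∀ n, x n ∈ Set.Icc (0 : ℝ) M)
    {δ : ℝ} (hδM : δ < M)
    (F : ↥(Kset M x) → ↥(Kset M y))
    (hF : ∀ p q : ↥(Kset M x), |dist p q - dist (F p) (F q)| ≤ 2 * δ) :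
    ∀ n : Fin N, ∃ m : Fin N,
      (F ⟨pp M x n, pp_mem M x n⟩ : ℝ × ℝ) ∈ ({pp M y m, pm M y m} : Set (ℝ × ℝ)) ∧
      (F ⟨pm M x n, pm_mem M x n⟩ : ℝ × ℝ) ∈ ({pp M y m, pm M y m} : Set (ℝ × ℝ)) := by
  intro n
  have hxn : |x n| ≤ M := abs_le.mpr ⟨by linarith [(hx n).1], (hx n).2⟩
  obtain ⟨m, hm⟩ := exists_mem_pair_image_of_fst_eq hM hδM hF (pp_mem M x n) rfl hxn
  obtain ⟨m', hm'⟩ := exists_mem_pair_image_of_fst_eq hM hδM hF (pm_mem M x n) rfl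
    ((abs_neg (x n)).trans_le hxn)
  have hpm : dist (pp M x n) (pm M x n) ≤ 2 * M := by rw [dist_pp_pm]; linarith
  have hF' := abs_le.mp (abs_dist_sub_dist_apply_le hF (pp_mem M x n) (pm_mem M x n))
  obtain rfl := eq_of_mem_pair_of_dist_lt hM.le hm hm' (by linarith [hF'.1])
  exact ⟨m, hm, hm'⟩

/-- Step 3: each marked pair `p_n^±(x)` is mapped into a marked pair `{p_m^+(y), p_m^-(y)}`. -/
theorem step3_image_of_marked_points {N : ℕ} (hN : 0 < N) {M : ℝ} (hM : 0 < M)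
    (x y : Fin N → ℝ) (hx : ∀ n, x n ∈ Set.Icc (0 : ℝ) M) (hy : ∀ n, y n ∈ Set.Icc (0 : ℝ) M)
    {δ : ℝ} (hδ0 : 0 < δ) (hδM : δ < M)
    (F : ↥(Kset M x) → ↥(Kset M y))
    (hF : ∀ p q : ↥(Kset M x), |dist p q - dist (F p) (F q)| ≤ 2 * δ) :
    ∀ n : Fin N, ∃ m : Fin N,
      (F ⟨pp M x n, pp_mem M x n⟩ : ℝ × ℝ) ∈ ({pp M y m, pm M y m} : Set (ℝ × ℝ)) ∧
      (F ⟨pm M x n, pm_mem M x n⟩ : ℝ × ℝ) ∈ ({pp M y m, pm M y m} : Set (ℝ × ℝ)) :=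
  step3_image_of_marked_points_general hM x y hx hδM F hF
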